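/- Let (M,g) be a compact Riemannian manifold with boundary such that every two points x, y ∈ M are joined by a minimizing geodesic that extends to a minimizing geodesic from x to some boundary point z. Then for all x, y ∈ M, d_g(x,y) = ‖r_x − r_y‖_{L^∞(∂M)}, where r_x(z) = d_g(x,z) for z ∈ ∂M. -/
import Mathlib


/-- If every two points of a compact metric space `M` with boundary `bdry` are
joined by a minimizing geodesic extending minimally to a boundary point, then
the distance equals the sup norm of the difference of boundary distance
functions. -/
theorem stmt_4 {M : Type*} [MetricSpace M] [CompactSpace M]
    (bdry : Set M) (hbdry : bdry.Nonempty) (hclosed : IsClosed bdry)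
    (hgeo : ∀ x y : M, ∃ z ∈ bdry, dist x z = dist x y + dist y z) :
    ∀ x y : M,
      dist x y = sSup {r : ℝ | ∃ z ∈ bdry, r = |dist x z - dist y z|} := by
  intro x y
  obtain ⟨z, hz, hzeq⟩ := hgeo x y
  have hmem : dist x y ∈ {r : ℝ | ∃ z ∈ bdry, r = |dist x z - dist y z|} := by
    refine ⟨z, hz, ?_⟩
    rw [hzeq]
    simp [abs_of_nonneg dist_nonneg]
  have hub : ∀ r ∈ {r : ℝ | ∃ z ∈ bdry, r = |dist x z - dist y z|},
      r ≤ dist x y := by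
    rintro r ⟨w, _, rfl⟩
    exact abs_dist_sub_le x y w
  exact le_antisymm (le_csSup ⟨dist x y, hub⟩ hmem) (csSup_le ⟨_, hmem⟩ hub)
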